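/- arXiv:2511.09362 — 4 statements merged into one kernel-verified Lean document; each statement's English description precedes it below -/
import Mathlib

section
/- Given the identities R_n = α_n - 2n - 1 - α, r_n + r_{n+1} = t - α_n R_n, r_n² - t r_n = β_n R_n R_{n-1}, nt - (2n+α) r_n = β_n(R_n + R_{n-1}), and n(n+α) + r_n + ∑_{j=0}^{n-1} R_j = β_n, the recurrence coefficients satisfy the first-order difference equation: α t + 2β_n(α_n + α_{n-1}) + (2n+α)[α_n(2n+2+α-α_n) - 3β_n - β_{n+1}] = 0. -/
/-!
Telescoping the sum identity gives `β_{n+1} - β_n = α_n + r_{n+1} - r_n`. Since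
`2n + 2 + α - α_n = 1 - R_n`, the identity `r_n + r_{n+1} = t - α_n R_n` then collapses the bracket
`α_n(2n+2+α-α_n) - 3β_n - β_{n+1}` to `2r_n - t - 4β_n`. Substituting the identity for
`nt - (2n+α) r_n` leaves `2β_n` times `α_n + α_{n-1} - R_n - R_{n-1} - 2(2n+α)`, which vanishes by the
definition of `R`.
-/

section LadderIdentities

variable {α t : ℝ} {a b R r : ℕ → ℝ}

lemma succ_sub_eq_of_partial_sum (hR : ∀ n : ℕ, R n = a n - 2 * n - 1 - α)
    (hsum : ∀ n : ℕ, (n : ℝ) * (n + α) + r n + ∑ j ∈ Finset.range n, R j = b n) (n : ℕ) :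
    b (n + 1) - b n = a n + r (n + 1) - r n := by
  have hsucc := hsum (n + 1)
  rw [Finset.sum_range_succ] at hsucc
  push_cast at hsucc
  linear_combination -hsucc + hsum n + hR n

lemma bracket_eq_two_mul_r_sub (hR : ∀ n : ℕ, R n = a n - 2 * n - 1 - α)
    (hrr : ∀ n : ℕ, r n + r (n + 1) = t - a n * R n)
    (hsum : ∀ n : ℕ, (n : ℝ) * (n + α) + r n + ∑ j ∈ Finset.range n, R j = b n) (n : ℕ) :
    a n * (2 * n + 2 + α - a n) - 3 * b n - b (n + 1) = 2 * r n - t - 4 * b n := by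
  linear_combination a n * hR n - hrr n - succ_sub_eq_of_partial_sum hR hsum n

lemma add_pred_sub_add_pred (hR : ∀ n : ℕ, R n = a n - 2 * n - 1 - α) {n : ℕ} (hn : 1 ≤ n) :
    a n + a (n - 1) - (R n + R (n - 1)) = 2 * (2 * n + α) := by
  rw [hR n, hR (n - 1), Nat.cast_sub hn]
  ring

end LadderIdentities

theorem first_order_difference_equation_one_general
    (α t : ℝ)
    (a b R r : ℕ → ℝ)
    (hR : ∀ n : ℕ, R n = a n - 2 * n - 1 - α)
    (hrr : ∀ n : ℕ, r n + r (n + 1) = t - a n * R n)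
    (hnt : ∀ n : ℕ, 1 ≤ n → (n : ℝ) * t - (2 * n + α) * r n = b n * (R n + R (n - 1)))
    (hsum : ∀ n : ℕ, (n : ℝ) * (n + α) + r n + ∑ j ∈ Finset.range n, R j = b n) :
    ∀ n : ℕ, 1 ≤ n →
      α * t + 2 * b n * (a n + a (n - 1))
        + (2 * n + α) * (a n * (2 * n + 2 + α - a n) - 3 * b n - b (n + 1)) = 0 := by
  intro n hn
  rw [bracket_eq_two_mul_r_sub hR hrr hsum n]
  linear_combination 2 * b n * add_pred_sub_add_pred hR hn - 2 * hnt n hn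

/-- Given the ladder-operator identities for the weight `x^α e^{-x-t/x}`, the recurrence
coefficients satisfy the first-order difference equation
`α t + 2β_n(α_n + α_{n-1}) + (2n+α)[α_n(2n+2+α-α_n) - 3β_n - β_{n+1}] = 0`. -/
theorem first_order_difference_equation_one
    (α t : ℝ) (hα : α > -1) (ht : t ≥ 0)
    (a b R r : ℕ → ℝ)
    (hR : ∀ n : ℕ, R n = a n - 2 * n - 1 - α)
    (hrr : ∀ n : ℕ, r n + r (n + 1) = t - a n * R n)
    (hr2 : ∀ n : ℕ, 1 ≤ n → (r n) ^ 2 - t * r n = b n * R n * R (n - 1))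
    (hnt : ∀ n : ℕ, 1 ≤ n → (n : ℝ) * t - (2 * n + α) * r n = b n * (R n + R (n - 1)))
    (hsum : ∀ n : ℕ, (n : ℝ) * (n + α) + r n + ∑ j ∈ Finset.range n, R j = b n) :
    ∀ n : ℕ, 1 ≤ n →
      α * t + 2 * b n * (a n + a (n - 1))
        + (2 * n + α) * (a n * (2 * n + 2 + α - a n) - 3 * b n - b (n + 1)) = 0 :=
  first_order_difference_equation_one_general α t a b R r hR hrr hnt hsum
end

section
/- Given the identities R_n = α_n - 2n - 1 - α, (2n+α) r_n = nt - β_n(α_n + α_{n-1} - 4n - 2α), and r_n² - t r_n = β_n R_n R_{n-1}, the recurrence coefficients satisfy: [nt - β_n(α_n + α_{n-1} - 4n - 2α)][(n+α)t + β_n(α_n + α_{n-1} - 4n - 2α)] + (2n+α)² β_n (α_n - 2n - 1 - α)(α_{n-1} - 2n + 1 - α) = 0. -/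
/-- Given the identities `R_n = α_n - 2n - 1 - α`,
`(2n+α) r_n = nt - β_n(α_n + α_{n-1} - 4n - 2α)` and `r_n² - t r_n = β_n R_n R_{n-1}`,
the recurrence coefficients satisfy the second equation of the discrete system. -/
theorem first_order_difference_equation_two
    (α t : ℝ) (hα : α > -1) (ht : t ≥ 0)
    (a b R r : ℕ → ℝ)
    (hR : ∀ n : ℕ, R n = a n - 2 * n - 1 - α)
    (hr : ∀ n : ℕ, 1 ≤ n →
      (2 * n + α) * r n = (n : ℝ) * t - b n * (a n + a (n - 1) - 4 * n - 2 * α))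
    (hr2 : ∀ n : ℕ, 1 ≤ n → (r n) ^ 2 - t * r n = b n * R n * R (n - 1)) :
    ∀ n : ℕ, 1 ≤ n → 2 * (n : ℝ) + α ≠ 0 →
      ((n : ℝ) * t - b n * (a n + a (n - 1) - 4 * n - 2 * α))
          * (((n : ℝ) + α) * t + b n * (a n + a (n - 1) - 4 * n - 2 * α))
        + (2 * n + α) ^ 2 * b n * (a n - 2 * n - 1 - α) * (a (n - 1) - 2 * n + 1 - α)
        = 0 := by
  intro n hn _
  have h1 := hr n hn
  have h2 := hr2 n hn
  rw [hR n, hR (n - 1)] at h2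
  have hcast : ((n - 1 : ℕ) : ℝ) = (n : ℝ) - 1 := by
    have := Nat.cast_sub hn (R := ℝ); simpa using this
  rw [hcast] at h2
  linear_combination (-(2 * (n : ℝ) + α) ^ 2) * h2 +
    ((2 * (n : ℝ) + α) * r n +
      ((n : ℝ) * t - b n * (a n + a (n - 1) - 4 * n - 2 * α)) -
      t * (2 * (n : ℝ) + α)) * h1
end

section
/- The mixed three-term recurrence relation holds: x² P_{n-2}(x; α+2) = [e_n/β_{n-1}(α) · (x - α_{n-1}(α)) - d_n] P_{n-1}(x;α) + (1 - e_n/β_{n-1}(α)) P_n(x;α), where d_n = P_n(0;α)/P_{n-1}(0;α) + P_{n-1}(0;α+1)/P_{n-2}(0;α+1) and e_n = [P_{n-1}(0;α)/P_{n-2}(0;α)]·[P_{n-1}(0;α+1)/P_{n-2}(0;α+1)]. -/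
open MeasureTheory Polynomial

/-- The mixed three-term recurrence relation:
`x² P_{n-2}(x; α+2) = [e_n/β_{n-1}(α)·(x - α_{n-1}(α)) - d_n] P_{n-1}(x;α)
  + (1 - e_n/β_{n-1}(α)) P_n(x;α)`,
where `d_n = P_n(0;α)/P_{n-1}(0;α) + P_{n-1}(0;α+1)/P_{n-2}(0;α+1)` and
`e_n = [P_{n-1}(0;α)/P_{n-2}(0;α)]·[P_{n-1}(0;α+1)/P_{n-2}(0;α+1)]`. -/
theorem mixed_three_term_recurrence
    (w₀ : ℝ → ℝ) (hw₀cont : ContinuousOn w₀ (Set.Ioi 0))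
    (hw₀pos : ∀ x ∈ Set.Ioi (0 : ℝ), 0 < w₀ x)
    (P : ℝ → ℕ → Polynomial ℝ) (a b : ℝ → ℕ → ℝ)
    (hmonic : ∀ (α : ℝ), -1 < α → ∀ n, (P α n).Monic)
    (hdeg : ∀ (α : ℝ), -1 < α → ∀ n, (P α n).natDegree = n)
    (hrec : ∀ (α : ℝ), -1 < α → ∀ n : ℕ, 1 ≤ n → ∀ x : ℝ,
      x * (P α n).eval x
        = (P α (n + 1)).eval x + a α n * (P α n).eval x + b α n * (P α (n - 1)).eval x)
    (hbpos : ∀ (α : ℝ), -1 < α → ∀ n : ℕ, 1 ≤ n → 0 < b α n)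
    -- Christoffel transform identities
    (hchr : ∀ (α : ℝ), -1 < α → ∀ n : ℕ, 1 ≤ n →
      (P α (n - 1)).eval 0 ≠ 0 →
      ∀ x : ℝ,
        x * (P (α + 1) (n - 1)).eval x
          = (P α n).eval x
            - ((P α n).eval 0 / (P α (n - 1)).eval 0) * (P α (n - 1)).eval x) :
    ∀ (α : ℝ), -1 < α → ∀ n : ℕ, 2 ≤ n →
      (P α (n - 1)).eval 0 ≠ 0 → (P α (n - 2)).eval 0 ≠ 0 →
      (P (α + 1) (n - 2)).eval 0 ≠ 0 →
      ∀ x : ℝ,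
        x ^ 2 * (P (α + 2) (n - 2)).eval x
          = (((P α (n - 1)).eval 0 / (P α (n - 2)).eval 0
                * ((P (α + 1) (n - 1)).eval 0 / (P (α + 1) (n - 2)).eval 0))
                / b α (n - 1) * (x - a α (n - 1))
              - ((P α n).eval 0 / (P α (n - 1)).eval 0
                  + (P (α + 1) (n - 1)).eval 0 / (P (α + 1) (n - 2)).eval 0))
            * (P α (n - 1)).eval x
          + (1 - ((P α (n - 1)).eval 0 / (P α (n - 2)).eval 0
                * ((P (α + 1) (n - 1)).eval 0 / (P (α + 1) (n - 2)).eval 0))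
                / b α (n - 1)) * (P α n).eval x := by

  intro α hα n hn h1 h2 h3 x
  obtain ⟨m, rfl⟩ : ∃ m, n = m + 2 := ⟨n - 2, by omega⟩
  simp only [show m + 2 - 1 = m + 1 from rfl, show m + 2 - 2 = m from rfl] at h1 h2 h3 ⊢
  have hα1 : -1 < α + 1 := by linarith
  have h12 : α + 1 + 1 = α + 2 := by ring
  have C2 := hchr (α + 1) hα1 (m + 1) (by omega) (by simpa using h3) x
  rw [show m + 1 - 1 = m from rfl, h12] at C2
  have C1 := hchr α hα (m + 2) (by omega) (by simpa using h1) x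
  rw [show m + 2 - 1 = m + 1 from rfl] at C1
  have C0 := hchr α hα (m + 1) (by omega) (by simpa using h2) x
  rw [show m + 1 - 1 = m from rfl] at C0
  have R := hrec α hα (m + 1) (by omega) x
  rw [show m + 1 - 1 = m from rfl] at R
  have hb : b α (m + 1) ≠ 0 := (hbpos α hα (m + 1) (by omega)).ne'
  have ht : (eval 0 (P α (m + 1)) / eval 0 (P α m)
        * (eval 0 (P (α + 1) (m + 1)) / eval 0 (P (α + 1) m))) / b α (m + 1) * b α (m + 1)
      = eval 0 (P α (m + 1)) / eval 0 (P α m)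
        * (eval 0 (P (α + 1) (m + 1)) / eval 0 (P (α + 1) m)) := div_mul_cancel₀ _ hb
  linear_combination x * C2 + C1
    - (eval 0 (P (α + 1) (m + 1)) / eval 0 (P (α + 1) m)) * C0
    - (eval 0 (P α (m + 1)) / eval 0 (P α m)
        * (eval 0 (P (α + 1) (m + 1)) / eval 0 (P (α + 1) m)) / b α (m + 1)) * R
    - (eval x (P α m)) * ht
end

section
/- The substitution H_n(t) = (1/2)[σ_n(s) + s² + n(n+α)] with t = s² transforms the equation (t H_n'')² = [n - (2n+α)H_n']² - 4[n(n+α) + t H_n' - H_n] H_n'(H_n' - 1) into the σ-form of Painlevé III: (s σ_n'' - σ_n')² = 4(2σ_n - s σ_n')((σ_n')² - 4s²) + 2(θ₀² + θ_∞²)((σ_n')² + 4s²) - 16 θ₀ θ_∞ s σ_n', with θ₀ = α and θ_∞ = -2n - α. -/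
/-! Writing `σ(s) = 2H(s²) - s² - n(n+α)`, the chain rule gives `σ'(s) = 4sH'(s²) - 2s` and
`σ''(s) = 4H'(s²) + 8s²H''(s²) - 2`, so `sσ'' - σ' = 8s³H''(s²)`. Once these are substituted, the
σ-form at `s` is exactly `64s²` times the equation for `H` at `t = s²`. -/

theorem HasDerivAt.comp_sq {𝕜 : Type*} [NontriviallyNormedField 𝕜] {f : 𝕜 → 𝕜} {f' x : 𝕜}
    (hf : HasDerivAt f f' (x ^ 2)) : HasDerivAt (fun x => f (x ^ 2)) (2 * x * f') x := by
  have hsq : HasDerivAt (fun x : 𝕜 => x ^ 2) (2 * x) x := by simpa using hasDerivAt_pow 2 x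
  exact (hf.comp x hsq).congr_deriv (mul_comm _ _)

section SquareSubstitution

variable {H σ : ℝ → ℝ} {c : ℝ}

theorem deriv_eq_of_eq_comp_sq (hH : Differentiable ℝ H)
    (hσ : ∀ s, σ s = 2 * H (s ^ 2) - s ^ 2 - c) :
    deriv σ = fun s => 4 * s * deriv H (s ^ 2) - 2 * s := by
  funext s
  have hsq : HasDerivAt (fun x : ℝ => x ^ 2) (2 * s) s := by simpa using hasDerivAt_pow 2 s
  have h := ((((hH _).hasDerivAt.comp_sq).const_mul 2).sub hsq).sub_const c
  rw [funext hσ]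
  exact h.deriv.trans (by ring)

theorem deriv_deriv_eq_of_eq_comp_sq (hH : Differentiable ℝ H)
    (hH' : Differentiable ℝ (deriv H)) (hσ : ∀ s, σ s = 2 * H (s ^ 2) - s ^ 2 - c) (s : ℝ) :
    deriv (deriv σ) s = 4 * deriv H (s ^ 2) + 8 * s ^ 2 * deriv (deriv H) (s ^ 2) - 2 := by
  have hlin : ∀ a : ℝ, HasDerivAt (fun x : ℝ => a * x) a s := fun a => by
    simpa using (hasDerivAt_id s).const_mul a
  have h := ((hlin 4).mul (hH' _).hasDerivAt.comp_sq).sub (hlin 2)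
  rw [deriv_eq_of_eq_comp_sq hH hσ]
  exact h.deriv.trans (by ring)

end SquareSubstitution

theorem sigma_form_of_H_equation {α n s h h' h'' : ℝ}
    (heq : (s ^ 2 * h'') ^ 2
      = (n - (2 * n + α) * h') ^ 2 - 4 * (n * (n + α) + s ^ 2 * h' - h) * h' * (h' - 1)) :
    (s * (4 * h' + 8 * s ^ 2 * h'' - 2) - (4 * s * h' - 2 * s)) ^ 2
      = 4 * (2 * (2 * h - s ^ 2 - n * (n + α)) - s * (4 * s * h' - 2 * s))
          * ((4 * s * h' - 2 * s) ^ 2 - 4 * s ^ 2)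
        + 2 * (α ^ 2 + (-2 * n - α) ^ 2) * ((4 * s * h' - 2 * s) ^ 2 + 4 * s ^ 2)
        - 16 * α * (-2 * n - α) * s * (4 * s * h' - 2 * s) := by
  linear_combination 64 * s ^ 2 * heq

theorem sigma_form_painleve_III_general
    (α : ℝ) (n : ℕ)
    (H : ℝ → ℝ) (hH : ContDiff ℝ 2 H)
    (heq : ∀ t : ℝ, 0 < t →
      (t * deriv (deriv H) t) ^ 2
        = ((n : ℝ) - (2 * n + α) * deriv H t) ^ 2
          - 4 * ((n : ℝ) * (n + α) + t * deriv H t - H t)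
            * deriv H t * (deriv H t - 1))
    (σ : ℝ → ℝ)
    (hσ : ∀ s : ℝ, σ s = 2 * H (s ^ 2) - s ^ 2 - (n : ℝ) * (n + α)) :
    ∀ s : ℝ, 0 < s →
      (s * deriv (deriv σ) s - deriv σ s) ^ 2
        = 4 * (2 * σ s - s * deriv σ s) * ((deriv σ s) ^ 2 - 4 * s ^ 2)
          + 2 * (α ^ 2 + (-2 * (n : ℝ) - α) ^ 2) * ((deriv σ s) ^ 2 + 4 * s ^ 2)
          - 16 * α * (-2 * (n : ℝ) - α) * s * deriv σ s := by
  intro s hs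
  have hH₁ : Differentiable ℝ H := hH.differentiable (by norm_num)
  have hH₂ : Differentiable ℝ (deriv H) :=
    (hH.deriv' (n := 1)).differentiable (by norm_num)
  rw [deriv_deriv_eq_of_eq_comp_sq hH₁ hH₂ hσ, deriv_eq_of_eq_comp_sq hH₁ hσ, hσ]
  exact sigma_form_of_H_equation (heq (s ^ 2) (by positivity))

/-- The substitution `H_n(t) = (1/2)[σ_n(s) + s² + n(n+α)]` with `t = s²` transforms the
equation `(t H_n'')² = [n - (2n+α)H_n']² - 4[n(n+α) + t H_n' - H_n] H_n'(H_n' - 1)` into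
the σ-form of Painlevé III with `θ₀ = α`, `θ_∞ = -2n - α`. -/
theorem sigma_form_painleve_III
    (α : ℝ) (hα : α > -1) (n : ℕ) (hn : 1 ≤ n)
    (H : ℝ → ℝ) (hH : ContDiff ℝ 2 H)
    (heq : ∀ t : ℝ, 0 < t →
      (t * deriv (deriv H) t) ^ 2
        = ((n : ℝ) - (2 * n + α) * deriv H t) ^ 2
          - 4 * ((n : ℝ) * (n + α) + t * deriv H t - H t)
            * deriv H t * (deriv H t - 1))
    (σ : ℝ → ℝ)
    (hσ : ∀ s : ℝ, σ s = 2 * H (s ^ 2) - s ^ 2 - (n : ℝ) * (n + α)) :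
    ∀ s : ℝ, 0 < s →
      (s * deriv (deriv σ) s - deriv σ s) ^ 2
        = 4 * (2 * σ s - s * deriv σ s) * ((deriv σ s) ^ 2 - 4 * s ^ 2)
          + 2 * (α ^ 2 + (-2 * (n : ℝ) - α) ^ 2) * ((deriv σ s) ^ 2 + 4 * s ^ 2)
          - 16 * α * (-2 * (n : ℝ) - α) * s * deriv σ s :=
  sigma_form_painleve_III_general α n H hH heq σ hσ
end
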